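/- arXiv:1411.5915 — 5 statements merged into one kernel-verified Lean document; each statement's English description precedes it below -/
import Mathlib

section
/- For every σ > 0 and every v ∈ ℝ, the Laplacian density with variance σ² admits the scale-mixture-of-Gaussians representation with exponential mixing density: ∫₀^∞ (2πτ)^(−1/2) · exp(−v²/(2τ)) · σ^(−2) · exp(−τ/σ²) dτ = (√2 · σ)^(−1) · exp(−√2·|v|/σ). -/
/-!
Substituting `τ = u ^ 2` turns the mixture integral into a multiple of
`∫₀^∞ exp (-(c ^ 2 / u ^ 2 + d ^ 2 * u ^ 2)) du` with `c = |v| / √2` and `d = 1 / σ`.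
Completing the square, `c ^ 2 / u ^ 2 + d ^ 2 * u ^ 2 = (d * u - c / u) ^ 2 + 2 * c * d`, and the
Cauchy–Schlömilch substitution `∫₀^∞ f (u - c / u) du = ½ ∫ f` for even `f` reduces the remaining
integral to the Gaussian integral.
-/

open Real MeasureTheory Set
open scoped ENNReal

theorem image_sub_div_Ioi {c : ℝ} (hc : 0 < c) : (fun u : ℝ => u - c / u) '' Ioi 0 = univ := by
  refine eq_univ_of_forall fun y => ?_
  have hdisc : 0 ≤ y ^ 2 + 4 * c := by positivity
  have hroot : |y| < √(y ^ 2 + 4 * c) := by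
    rw [← sqrt_sq_eq_abs]; exact sqrt_lt_sqrt (sq_nonneg y) (by linarith)
  have hpos : 0 < y + √(y ^ 2 + 4 * c) := by linarith [neg_abs_le y]
  refine ⟨(y + √(y ^ 2 + 4 * c)) / 2, half_pos hpos, ?_⟩
  field_simp
  nlinarith [sq_sqrt hdisc]

theorem image_div_Ioi {c : ℝ} (hc : 0 < c) : (fun w : ℝ => c / w) '' Ioi 0 = Ioi 0 := by
  ext y
  refine ⟨?_, fun hy => ⟨c / y, div_pos hc hy, div_div_cancel₀ hc.ne'⟩⟩
  rintro ⟨w, hw, rfl⟩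
  exact div_pos hc hw

theorem strictAntiOn_div_Ioi {c : ℝ} (hc : 0 < c) : StrictAntiOn (fun w : ℝ => c / w) (Ioi 0) :=
  fun _ hx _ _ hxy => div_lt_div_of_pos_left hc hx hxy

theorem strictMonoOn_sub_div_Ioi {c : ℝ} (hc : 0 < c) :
    StrictMonoOn (fun u : ℝ => u - c / u) (Ioi 0) :=
  fun _ hx _ hy hxy => sub_lt_sub hxy (strictAntiOn_div_Ioi hc hx hy hxy)

theorem hasDerivAt_const_div (c : ℝ) {w : ℝ} (hw : w ≠ 0) :
    HasDerivAt (fun w => c / w) (-(c / w ^ 2)) w := by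
  simpa [div_eq_mul_inv] using (hasDerivAt_inv hw).const_mul c

theorem hasDerivAt_sub_const_div (c : ℝ) {u : ℝ} (hu : u ≠ 0) :
    HasDerivAt (fun u => u - c / u) (1 + c / u ^ 2) u := by
  simpa using (hasDerivAt_id' u).fun_sub (hasDerivAt_const_div c hu)

theorem lintegral_Ioi_comp_sub_div_of_even {g : ℝ → ℝ≥0∞} (hg : Measurable g)
    (hg_even : Function.Even g) {c : ℝ} (hc : 0 < c) :
    2 * ∫⁻ u in Ioi 0, g (u - c / u) = ∫⁻ x, g x := by
  -- the substitution `u ↦ c / u` exchanges the two parts of the Jacobian `1 + c / u ^ 2`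
  have hswap : ∫⁻ u in Ioi 0, g (u - c / u)
      = ∫⁻ u in Ioi 0, ENNReal.ofReal (c / u ^ 2) * g (u - c / u) := by
    have hcov := lintegral_image_eq_lintegral_abs_deriv_mul measurableSet_Ioi
      (fun w hw => (hasDerivAt_const_div c (ne_of_gt hw)).hasDerivWithinAt)
      (strictAntiOn_div_Ioi hc).injOn (fun u => g (u - c / u))
    rw [image_div_Ioi hc] at hcov
    rw [hcov]
    refine setLIntegral_congr_fun measurableSet_Ioi fun u (hu : 0 < u) => ?_
    rw [abs_neg, abs_of_pos (by positivity), ← hg_even]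
    congr 2
    field_simp
    ring
  have hcov := lintegral_image_eq_lintegral_abs_deriv_mul measurableSet_Ioi
    (fun u (hu : 0 < u) => (hasDerivAt_sub_const_div c hu.ne').hasDerivWithinAt)
    (strictMonoOn_sub_div_Ioi hc).injOn g
  rw [image_sub_div_Ioi hc, Measure.restrict_univ] at hcov
  rw [hcov, two_mul]
  nth_rw 2 [hswap]
  rw [← lintegral_add_left (by fun_prop)]
  refine setLIntegral_congr_fun measurableSet_Ioi fun u (hu : 0 < u) => ?_
  rw [abs_of_pos (by positivity), ENNReal.ofReal_add zero_le_one (by positivity), ENNReal.ofReal_one,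
    add_mul, one_mul]

theorem integral_Ioi_exp_neg_sq_sub_div {c : ℝ} (hc : 0 ≤ c) :
    ∫ u in Ioi 0, exp (-(u - c / u) ^ 2) = √π / 2 := by
  rcases hc.eq_or_lt with rfl | hc
  · simpa using integral_gaussian_Ioi 1
  have hgauss : ∫⁻ x, ENNReal.ofReal (exp (-x ^ 2)) = ENNReal.ofReal √π := by
    rw [← ofReal_integral_eq_lintegral_ofReal (by simpa using integrable_exp_neg_mul_sq one_pos)
      (ae_of_all _ fun _ => (exp_pos _).le)]
    congr 1
    simpa using integral_gaussian 1
  have hcs := lintegral_Ioi_comp_sub_div_of_even (g := fun x => ENNReal.ofReal (exp (-x ^ 2)))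
    (by fun_prop) (fun x => by simp) hc
  rw [hgauss] at hcs
  rw [integral_eq_lintegral_of_nonneg_ae (ae_of_all _ fun _ => (exp_pos _).le) (by fun_prop)]
  have hreal := congrArg ENNReal.toReal hcs
  rw [ENNReal.toReal_mul, ENNReal.toReal_ofNat, ENNReal.toReal_ofReal (sqrt_nonneg _)] at hreal
  linarith

theorem integral_Ioi_exp_neg_div_sq_add_mul_sq {c d : ℝ} (hc : 0 ≤ c) (hd : 0 < d) :
    ∫ u in Ioi 0, exp (-(c ^ 2 / u ^ 2 + d ^ 2 * u ^ 2)) = √π / (2 * d) * exp (-(2 * c * d)) := by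
  have hsquare : ∀ u ∈ Ioi (0 : ℝ), exp (-(c ^ 2 / u ^ 2 + d ^ 2 * u ^ 2))
      = exp (-(d * u - c * d / (d * u)) ^ 2) * exp (-(2 * c * d)) := by
    intro u (hu : 0 < u)
    rw [← exp_add]
    congr 1
    field_simp
    ring
  rw [setIntegral_congr_fun measurableSet_Ioi hsquare, integral_mul_const,
    integral_comp_mul_left_Ioi (fun w => exp (-(w - c * d / w) ^ 2)) 0 hd, mul_zero,
    integral_Ioi_exp_neg_sq_sub_div (by positivity), smul_eq_mul]
  field_simp

theorem integral_Ioi_inv_sqrt_mul_exp_neg_div_add_mul {c d : ℝ} (hc : 0 ≤ c) (hd : 0 < d) :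
    ∫ τ in Ioi 0, (√τ)⁻¹ * exp (-(c ^ 2 / τ + d ^ 2 * τ)) = √π / d * exp (-(2 * c * d)) := by
  rw [← integral_comp_rpow_Ioi_of_pos two_pos]
  have hsub : ∀ u ∈ Ioi (0 : ℝ), ((2 : ℝ) * u ^ ((2 : ℝ) - 1)) •
      ((√(u ^ (2 : ℝ)))⁻¹ * exp (-(c ^ 2 / u ^ (2 : ℝ) + d ^ 2 * u ^ (2 : ℝ))))
      = 2 * exp (-(c ^ 2 / u ^ 2 + d ^ 2 * u ^ 2)) := by
    intro u (hu : 0 < u)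
    rw [show (2 : ℝ) - 1 = 1 by norm_num, rpow_one, rpow_two, sqrt_sq hu.le, smul_eq_mul]
    field_simp
  rw [setIntegral_congr_fun measurableSet_Ioi hsub, integral_const_mul,
    integral_Ioi_exp_neg_div_sq_add_mul_sq hc hd]
  field_simp

/-- The Laplacian density with variance `σ²` is a scale mixture of Gaussians with
exponential mixing density of parameter `σ²`. -/
theorem laplacian_scale_mixture_of_gaussians (σ v : ℝ) (hσ : 0 < σ) :
    ∫ τ in Set.Ioi (0 : ℝ),
        (Real.sqrt (2 * Real.pi * τ))⁻¹ * Real.exp (-(v ^ 2) / (2 * τ)) *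
          ((σ ^ 2)⁻¹ * Real.exp (-(τ / σ ^ 2)))
      = (Real.sqrt 2 * σ)⁻¹ * Real.exp (-(Real.sqrt 2 * |v|) / σ) := by
  have hintegrand : ∀ τ ∈ Ioi (0 : ℝ),
      (√(2 * π * τ))⁻¹ * exp (-(v ^ 2) / (2 * τ)) * ((σ ^ 2)⁻¹ * exp (-(τ / σ ^ 2)))
        = ((√(2 * π))⁻¹ * (σ ^ 2)⁻¹) *
          ((√τ)⁻¹ * exp (-((|v| / √2) ^ 2 / τ + σ⁻¹ ^ 2 * τ))) := by
    intro τ (hτ : 0 < τ)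
    rw [sqrt_mul (by positivity), div_pow, sq_abs, sq_sqrt zero_le_two, neg_add, exp_add]
    field_simp
  rw [setIntegral_congr_fun measurableSet_Ioi hintegrand, integral_const_mul,
    integral_Ioi_inv_sqrt_mul_exp_neg_div_add_mul (by positivity) (inv_pos.mpr hσ),
    sqrt_mul zero_le_two]
  have hexponent : 2 * (|v| / √2) * σ⁻¹ = √2 * |v| / σ := by
    field_simp
    rw [sq_sqrt zero_le_two, mul_comm]
  rw [hexponent, neg_div]
  field_simp
end

section
/- Let n be a positive integer and β ∈ ℝ. Let K_β be the n×n matrix with entries (K_β)_{i,j} = β^(max(i,j)), let Δ be the n×n upper bidiagonal matrix with 1 on the main diagonal, −1 on the superdiagonal, and 0 elsewhere, and let W_β be the n×n diagonal matrix with diagonal entries (W_β)_{i,i} = (1−β)·β^i for i = 1,…,n−1 and (W_β)_{n,n} = β^n. Then Δ·K_β·Δᵀ = W_β. -/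
open Matrix

/-- The first-order stable spline kernel: `(K_β)_{i,j} = β^(max(i,j))` for
`i, j = 1, …, n` (here indexed by `Fin n` via `i ↦ i + 1`). -/
def ssKernel (n : ℕ) (β : ℝ) : Matrix (Fin n) (Fin n) ℝ :=
  Matrix.of fun i j => β ^ (max (i : ℕ) (j : ℕ) + 1)

/-- The discrete derivator `Δ`: upper bidiagonal with `1` on the main diagonal and
`−1` on the superdiagonal. -/
def deltaMat (n : ℕ) : Matrix (Fin n) (Fin n) ℝ :=
  Matrix.of fun i j => if j = i then 1 else if (j : ℕ) = (i : ℕ) + 1 then -1 else 0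

/-- The diagonal matrix `W_β` with diagonal entries `(1−β)β^i` for `i = 1, …, n−1`
and `β^n` for `i = n`. -/
def wMat (n : ℕ) (β : ℝ) : Matrix (Fin n) (Fin n) ℝ :=
  Matrix.diagonal fun i => if (i : ℕ) + 1 = n then β ^ n else (1 - β) * β ^ ((i : ℕ) + 1)

/-!
`Δᵀ` is the inverse of the summation matrix `T` (ones on and below the diagonal), and
`Δ K_β = W_β T`: row `i` of `Δ K_β` is `β^(max(i,l)) - β^(max(i+1,l))`, which vanishes
for `l > i` and equals `(W_β)_{i,i}` for `l ≤ i`. Hence `Δ K_β Δᵀ = W_β T Δᵀ = W_β`.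
-/

def lowerOnes (n : ℕ) : Matrix (Fin n) (Fin n) ℝ :=
  Matrix.of fun i j => if j ≤ i then 1 else 0

theorem deltaMat_mul_apply {n : ℕ} {m : Type*} [Fintype m] (A : Matrix (Fin n) m ℝ)
    (i : Fin n) (j : m) :
    (deltaMat n * A) i j = A i j - if h : (i : ℕ) + 1 < n then A ⟨i + 1, h⟩ j else 0 := by
  have hrow : ∀ k, deltaMat n i k * A k j =
      (if k = i then A k j else 0) - if (k : ℕ) = i + 1 then A k j else 0 := by
    intro k
    simp only [deltaMat, of_apply]
    split_ifs <;> first | omega | ring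
  rw [mul_apply, Finset.sum_congr rfl fun k _ => hrow k, Finset.sum_sub_distrib,
    Finset.sum_ite_eq' Finset.univ i, if_pos (Finset.mem_univ i)]
  congr 1
  split_ifs with h
  · simp [← Fin.ext_iff (b := ⟨i + 1, h⟩)]
  · exact Finset.sum_eq_zero fun k _ => if_neg (by omega)

theorem mul_deltaMat_transpose_apply {n : ℕ} {m : Type*} [Fintype m] (A : Matrix m (Fin n) ℝ)
    (i : m) (j : Fin n) :
    (A * (deltaMat n)ᵀ) i j = A i j - if h : (j : ℕ) + 1 < n then A i ⟨j + 1, h⟩ else 0 := by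
  rw [← transpose_transpose (A * _), transpose_mul, transpose_transpose, transpose_apply,
    deltaMat_mul_apply]
  rfl

theorem lowerOnes_mul_deltaMat_transpose (n : ℕ) : lowerOnes n * (deltaMat n)ᵀ = 1 := by
  ext i j
  rw [mul_deltaMat_transpose_apply, one_apply]
  simp only [lowerOnes, of_apply, Fin.ext_iff, Fin.le_def]
  split_ifs <;> first | omega | norm_num

theorem deltaMat_mul_ssKernel (n : ℕ) (β : ℝ) :
    deltaMat n * ssKernel n β = wMat n β * lowerOnes n := by
  ext i l
  rw [deltaMat_mul_apply, wMat, diagonal_mul]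
  simp only [ssKernel, lowerOnes, of_apply, Fin.le_def]
  have hi := i.isLt
  by_cases hli : (l : ℕ) ≤ i
  · rw [max_eq_left hli, if_pos hli]
    by_cases hlast : (i : ℕ) + 1 = n
    · rw [dif_neg (by omega), if_pos hlast, hlast]; ring
    · rw [dif_pos (by omega), if_neg hlast, max_eq_left (by omega)]; ring
  · have hl := l.isLt
    rw [dif_pos (by omega), max_eq_right (by omega), max_eq_right (by omega), if_neg hli]
    ring

theorem delta_ssKernel_delta_transpose_general (n : ℕ) (β : ℝ) :
    deltaMat n * ssKernel n β * (deltaMat n)ᵀ = wMat n β := by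
  rw [deltaMat_mul_ssKernel, Matrix.mul_assoc, lowerOnes_mul_deltaMat_transpose, Matrix.mul_one]

/-- Factorization of the first-order stable spline kernel: `Δ K_β Δᵀ = W_β`. -/
theorem delta_ssKernel_delta_transpose (n : ℕ) (hn : 0 < n) (β : ℝ) :
    deltaMat n * ssKernel n β * (deltaMat n)ᵀ = wMat n β :=
  delta_ssKernel_delta_transpose_general n β
end

section
/- Let n be a positive integer and β ∈ ℝ. The determinant of the n×n first-order stable spline kernel matrix K_β with entries (K_β)_{i,j} = β^(max(i,j)) is det K_β = (1−β)^(n−1) · β^(n(n+1)/2). -/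
/-!
Index `K_β` of size `n + 1` by `0, …, n` and write `f k = β ^ (k + 1)`, so that
`K_β = (f (max i j))`. Reversing the order of the indices turns it into `(g (min i j))` with
`g k = f (n - k)`, and subtracting from each row the preceding one makes that matrix upper
triangular with diagonal `g 0, g 1 - g 0, …, g n - g (n - 1)`. Hence
`det K_β = β ^ (n + 1) * ∏_{i < n} (1 - β) β ^ (i + 1)`.
-/

open Matrix

namespace Matrix

variable {R : Type*} [CommRing R]

theorem det_of_min (f : ℕ → R) (n : ℕ) :
    (of fun i j : Fin (n + 1) => f (min (i : ℕ) j)).det =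
      f 0 * ∏ i : Fin n, (f (i + 1) - f i) := by
  set U : Matrix (Fin (n + 1)) (Fin (n + 1)) R := of fun i j =>
    if j < i then 0 else Fin.cons (α := fun _ => R) (f 0) (fun k : Fin n => f (k + 1) - f k) i
  have hU : U.IsUpperTriangular := fun i j hji => if_pos hji
  calc _ = U.det := by
        refine det_eq_of_forall_row_eq_smul_add_pred (fun _ => 1) (fun j => by simp [U]) ?_
        intro i j
        rcases le_or_gt (j : ℕ) i with hji | hij
        · have hmin : min ((i : ℕ) + 1) j = min (i : ℕ) j := by omega
          have hlt : j < i.succ := by rw [Fin.lt_def, Fin.val_succ]; omega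
          simp [U, hmin, hlt]
        · have hmin : min ((i : ℕ) + 1) j = (i : ℕ) + 1 := by omega
          have hge : ¬j < i.succ := by rw [Fin.lt_def, Fin.val_succ]; omega
          simp [U, hmin, min_eq_left hij.le, hge]
    _ = ∏ i, U i i := det_of_isUpperTriangular hU
    _ = _ := by simp [U, Fin.prod_univ_succ]

theorem det_of_max (f : ℕ → R) (n : ℕ) :
    (of fun i j : Fin (n + 1) => f (max (i : ℕ) j)).det =
      f n * ∏ i : Fin n, (f i - f (i + 1)) := by
  have hrev : (of fun i j : Fin (n + 1) => f (max (i : ℕ) j)).submatrix Fin.revPerm Fin.revPerm =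
      of fun i j : Fin (n + 1) => f (n - min (i : ℕ) j) := by
    ext i j
    simp only [submatrix_apply, of_apply, Fin.revPerm_apply, Fin.val_rev]
    congr 1
    omega
  rw [← det_submatrix_equiv_self Fin.revPerm, hrev, det_of_min (fun k => f (n - k)), Nat.sub_zero]
  congr 1
  refine Fintype.prod_equiv Fin.revPerm _ _ fun i => ?_
  simp only [Fin.revPerm_apply, Fin.val_rev]
  congr 2
  omega

end Matrix

theorem pow_succ_mul_prod_pow_sub_pow_succ {R : Type*} [CommRing R] (β : R) (m : ℕ) :
    β ^ (m + 1) * ∏ i : Fin m, (β ^ ((i : ℕ) + 1) - β ^ ((i : ℕ) + 1 + 1)) =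
      (1 - β) ^ m * β ^ ((m + 1) * (m + 2) / 2) := by
  induction m with
  | zero => simp
  | succ m ih =>
    have hexp : (m + 1 + 1) * (m + 1 + 2) / 2 = (m + 1) * (m + 2) / 2 + (m + 2) := by
      rw [show (m + 1 + 1) * (m + 1 + 2) = (m + 1) * (m + 2) + 2 * (m + 2) by ring,
        Nat.add_mul_div_left _ _ two_pos]
    rw [Fin.prod_univ_castSucc, hexp]
    simp only [Fin.val_castSucc, Fin.val_last]
    linear_combination (β ^ (m + 2) * (1 - β)) * ih

theorem ssKernel_det_general (n : ℕ) (β : ℝ) :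
    (ssKernel n β).det = (1 - β) ^ (n - 1) * β ^ (n * (n + 1) / 2) := by
  cases n with
  | zero => simp
  | succ m =>
    rw [ssKernel, det_of_max (fun k => β ^ (k + 1)), Nat.add_sub_cancel,
      pow_succ_mul_prod_pow_sub_pow_succ]

/-- Determinant of the first-order stable spline kernel:
`det K_β = (1−β)^(n−1) · β^(n(n+1)/2)`. -/
theorem ssKernel_det (n : ℕ) (hn : 0 < n) (β : ℝ) :
    (ssKernel n β).det = (1 - β) ^ (n - 1) * β ^ (n * (n + 1) / 2) :=
  ssKernel_det_general n β
end

section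
/- Let n be a positive integer and β ∈ (0, 1). Then the n×n first-order stable spline kernel matrix K_β with entries (K_β)_{i,j} = β^(max(i,j)) is symmetric positive definite; in particular it is a valid covariance matrix for the Gaussian prior on the impulse response. -/
open Matrix

/-! Extend `f k = β^(k+1)` by zero beyond `n - 1`. Then `f (max i j)` is the tail sum
`∑_{k ≥ max i j} (f k - f (k+1))`, i.e. `K = Lᵀ D L` with `L` the lower-triangular all-ones
matrix and `D` the diagonal of the increments `f k - f (k+1)`. These are positive because
`f` is positive and strictly decreasing, and `L` is unipotent, so `K` is positive definite. -/

open Finset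

namespace Matrix

variable {R : Type*} (n : ℕ)

def maxKernel (f : ℕ → R) : Matrix (Fin n) (Fin n) R :=
  of fun i j => f (max (i : ℕ) (j : ℕ))

def lowerOnes [Zero R] [One R] : Matrix (Fin n) (Fin n) R :=
  of fun k i => if i ≤ k then 1 else 0

noncomputable def maxKernelWeight [AddGroup R] (f : ℕ → R) (k : ℕ) : R :=
  (Set.Iio n).indicator f k - (Set.Iio n).indicator f (k + 1)

variable {n}

lemma sum_maxKernelWeight_of_lt [AddCommGroup R] (f : ℕ → R) {m : ℕ} (hm : m < n) :
    ∑ k : Fin n, (if m ≤ (k : ℕ) then maxKernelWeight n f k else 0) = f m := by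
  rw [Fin.sum_univ_eq_sum_range (fun k => if m ≤ k then maxKernelWeight n f k else 0),
    ← sum_filter, show (range n).filter (m ≤ ·) = Ico m n by ext; simp; omega]
  have htelescope := sum_Ico_sub (fun k => -(Set.Iio n).indicator f k) hm.le
  simp only [neg_sub_neg] at htelescope
  simp only [maxKernelWeight]
  rw [htelescope, Set.indicator_of_mem (Set.mem_Iio.mpr hm),
    Set.indicator_of_notMem (Set.self_notMem_Iio (a := n)), sub_zero]

theorem maxKernel_eq_transpose_mul_diagonal_mul [CommRing R] (f : ℕ → R) :
    maxKernel n f =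
      (lowerOnes n)ᵀ * diagonal (fun k : Fin n => maxKernelWeight n f k) * lowerOnes n := by
  ext i j
  rw [mul_apply]
  simp only [mul_diagonal, transpose_apply, lowerOnes, maxKernel, of_apply]
  rw [← sum_maxKernelWeight_of_lt f (max_lt i.isLt j.isLt)]
  refine sum_congr rfl fun k _ => ?_
  simp only [max_le_iff, Fin.val_fin_le, ite_and]
  split_ifs <;> simp

lemma det_lowerOnes [CommRing R] : (lowerOnes n : Matrix (Fin n) (Fin n) R).det = 1 := by
  have hlower : (lowerOnes n : Matrix (Fin n) (Fin n) R).IsLowerTriangular :=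
    fun k i (h : k < i) => if_neg (not_le.mpr h)
  rw [det_of_isLowerTriangular _ hlower]
  simp [lowerOnes]

lemma maxKernelWeight_pos [AddGroup R] [PartialOrder R] [AddRightStrictMono R] {f : ℕ → R}
    (hanti : StrictAntiOn f (Set.Iio n)) (hpos : ∀ k < n, 0 < f k) {k : ℕ} (hk : k < n) :
    0 < maxKernelWeight n f k := by
  rw [maxKernelWeight, Set.indicator_of_mem (Set.mem_Iio.mpr hk)]
  by_cases hk' : k + 1 < n
  · rw [Set.indicator_of_mem (Set.mem_Iio.mpr hk'), sub_pos]
    exact hanti hk hk' k.lt_succ_self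
  · rw [Set.indicator_of_notMem (by simpa using hk'), sub_zero]
    exact hpos k hk

theorem maxKernel_posDef {f : ℕ → ℝ} (hanti : StrictAntiOn f (Set.Iio n))
    (hpos : ∀ k < n, 0 < f k) : (maxKernel n f).PosDef := by
  have hweight : (diagonal fun k : Fin n => maxKernelWeight n f k).PosDef :=
    posDef_diagonal_iff.mpr fun k => maxKernelWeight_pos hanti hpos k.isLt
  have hinj : Function.Injective (lowerOnes n : Matrix (Fin n) (Fin n) ℝ).mulVec :=
    mulVec_injective_of_isUnit <| (isUnit_iff_isUnit_det _).mpr <| by simp [det_lowerOnes]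
  rw [maxKernel_eq_transpose_mul_diagonal_mul, ← conjTranspose_eq_transpose_of_trivial]
  exact hweight.conjTranspose_mul_mul_same hinj

end Matrix

theorem ssKernel_posDef_general (n : ℕ) (β : ℝ) (hβ : β ∈ Set.Ioo (0 : ℝ) 1) :
    (ssKernel n β).PosDef :=
  maxKernel_posDef (f := fun k => β ^ (k + 1))
    (fun _ _ _ _ hlt => pow_lt_pow_right_of_lt_one₀ hβ.1 hβ.2 (by omega))
    (fun _ _ => pow_pos hβ.1 _)

/-- For `β ∈ (0,1)`, the first-order stable spline kernel is symmetric positive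
definite, hence a valid covariance matrix. -/
theorem ssKernel_posDef (n : ℕ) (hn : 0 < n) (β : ℝ) (hβ : β ∈ Set.Ioo (0 : ℝ) 1) :
    (ssKernel n β).PosDef :=
  ssKernel_posDef_general n β hβ
end

section
/- (Proposition 1, Laplacian grouped noise-variance update.) Let ζ > 0, σ > 0, and let m be a positive integer. The function Q(Υ) = ζ/Υ + m·log Υ + (2/σ²)·Υ on (0, ∞) has a unique global minimizer, attained at Υ* = (m·σ²/4)·(√(1 + 8ζ/(m²σ²)) − 1). -/
open Real

/-!
With `c = 2/σ²`, the formula for `Υ*` is the positive root of the stationarity equation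
`c Υ² + m Υ = ζ`. Substituting this expression for `ζ`, and bounding the logarithm by
`log (Υ*/Υ) ≤ Υ*/Υ - 1`, gives `Q Υ - Q Υ* ≥ c (Υ - Υ*)² / Υ`.
-/

noncomputable def groupedObjective (ζ m c x : ℝ) : ℝ :=
  ζ / x + m * log x + c * x

lemma groupedObjective_sub_ge {ζ m c x₀ x : ℝ} (hm : 0 ≤ m) (hx₀ : 0 < x₀) (hx : 0 < x)
    (hζ : ζ = c * x₀ ^ 2 + m * x₀) :
    c * (x - x₀) ^ 2 / x ≤ groupedObjective ζ m c x - groupedObjective ζ m c x₀ := by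
  have hlog : log x₀ - log x ≤ x₀ / x - 1 := by
    rw [← log_div hx₀.ne' hx.ne']
    exact log_le_sub_one_of_pos (div_pos hx₀ hx)
  have hrest : groupedObjective ζ m c x - groupedObjective ζ m c x₀
      = c * (x - x₀) ^ 2 / x + m * (x₀ / x - 1 - (log x₀ - log x)) := by
    unfold groupedObjective
    rw [hζ]
    field_simp
    ring
  rw [hrest]
  nlinarith [mul_nonneg hm (sub_nonneg.2 hlog)]

lemma groupedObjective_lt_of_ne {ζ m c x₀ x : ℝ} (hm : 0 ≤ m) (hc : 0 < c) (hx₀ : 0 < x₀)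
    (hx : 0 < x) (hne : x ≠ x₀) (hζ : ζ = c * x₀ ^ 2 + m * x₀) :
    groupedObjective ζ m c x₀ < groupedObjective ζ m c x := by
  have hgap : 0 < c * (x - x₀) ^ 2 / x := by
    have : (x - x₀) ^ 2 ≠ 0 := pow_ne_zero 2 (sub_ne_zero.2 hne)
    positivity
  linarith [groupedObjective_sub_ge hm hx₀ hx hζ]

lemma stationary_point_eq {ζ σ m : ℝ} (hσ : σ ≠ 0) (hm : m ≠ 0)
    (hdisc : 0 ≤ 1 + 8 * ζ / (m ^ 2 * σ ^ 2)) :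
    ζ = 2 / σ ^ 2 * (m * σ ^ 2 / 4 * (√(1 + 8 * ζ / (m ^ 2 * σ ^ 2)) - 1)) ^ 2
      + m * (m * σ ^ 2 / 4 * (√(1 + 8 * ζ / (m ^ 2 * σ ^ 2)) - 1)) := by
  have hs := sq_sqrt hdisc
  set s := √(1 + 8 * ζ / (m ^ 2 * σ ^ 2))
  have h8 : 8 * ζ = (s ^ 2 - 1) * (m ^ 2 * σ ^ 2) := by
    rw [hs]; field_simp; ring
  have hrhs : 2 / σ ^ 2 * (m * σ ^ 2 / 4 * (s - 1)) ^ 2 + m * (m * σ ^ 2 / 4 * (s - 1))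
      = (s ^ 2 - 1) * (m ^ 2 * σ ^ 2) / 8 := by
    field_simp
    ring
  rw [hrhs, ← h8]
  ring

lemma stationary_point_pos {ζ σ m : ℝ} (hζ : 0 < ζ) (hσ : σ ≠ 0) (hm : 0 < m) :
    0 < m * σ ^ 2 / 4 * (√(1 + 8 * ζ / (m ^ 2 * σ ^ 2)) - 1) := by
  have h1 : 1 < √(1 + 8 * ζ / (m ^ 2 * σ ^ 2)) := by
    rw [lt_sqrt zero_le_one]
    have : 0 < 8 * ζ / (m ^ 2 * σ ^ 2) := by positivity
    linarith
  have := sub_pos.2 h1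
  positivity

/-- Proposition 1, Laplacian grouped noise-variance update:
`Q(Υ) = ζ/Υ + m log Υ + (2/σ²)Υ` on `(0, ∞)` has the unique global minimizer
`Υ* = (mσ²/4)(√(1 + 8ζ/(m²σ²)) − 1)`. -/
theorem laplacian_grouped_update (ζ σ : ℝ) (hζ : 0 < ζ) (hσ : 0 < σ)
    (m : ℕ) (hm : 0 < m) (Υs : ℝ)
    (hΥs : Υs = m * σ ^ 2 / 4 * (Real.sqrt (1 + 8 * ζ / (m ^ 2 * σ ^ 2)) - 1)) :
    0 < Υs ∧
      ∀ Υ : ℝ, 0 < Υ → Υ ≠ Υs →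
        ζ / Υs + m * Real.log Υs + 2 / σ ^ 2 * Υs
          < ζ / Υ + m * Real.log Υ + 2 / σ ^ 2 * Υ := by
  have hm' : (0 : ℝ) < m := Nat.cast_pos.2 hm
  have hpos : 0 < Υs := hΥs ▸ stationary_point_pos hζ hσ.ne' hm'
  have hstat : ζ = 2 / σ ^ 2 * Υs ^ 2 + m * Υs := by
    rw [hΥs]
    exact stationary_point_eq hσ.ne' hm'.ne' (by positivity)
  exact ⟨hpos, fun Υ hΥ hne =>
    groupedObjective_lt_of_ne hm'.le (by positivity) hpos hΥ hne hstat⟩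
end
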